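/- Let ψ(w) = w^{1/β} on a sector {ρe^{iθ} : 0 < θ < 2πβ/(1+β), 0<ρ<1} and Φ(z) = |z|^{β−1}z. Then the composition Φ ∘ ψ is bi-Lipschitz onto its image. -/

import Mathlib

/-!
In polar coordinates `phiPsi β` is `r e^{iθ} ↦ r e^{iθ/β}`, and
`|r e^{ia} - r' e^{ib}|² = (r - r')² + 4 r r' sin²((a - b)/2)`. The radial terms agree, so
it suffices to compare `|sin y|` with `|sin (y/β)|` for `y` half an angle difference in the
sector. There `|y| ≤ π/2` and `|y/β| ≤ π/(1+β)`, both at most `M = max (π/2) (π/(1+β)) < π`,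
and on `[0, M]` concavity of `sin` gives `(sin M / M) t ≤ sin t ≤ t`.
-/
/-- The sector 0 < arg w < 2πβ/(1+β), 0 < |w| < 1. -/
def sector (β : ℝ) : Set ℂ :=
  {w : ℂ | 0 < ‖w‖ ∧ ‖w‖ < 1 ∧
    0 < Complex.arg w ∧ Complex.arg w < 2 * Real.pi * β / (1 + β)}

/-- Φ ∘ ψ (w) = |w|^{1−1/β} • w^{1/β}, where ψ(w) = w^{1/β} (principal branch) and
Φ(z) = |z|^{β−1} z. -/
noncomputable def phiPsi (β : ℝ) (w : ℂ) : ℂ :=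
  (‖w‖ ^ (1 - 1 / β)) • (w ^ ((1 : ℂ) / (β : ℂ)))

open Complex
open scoped Real

lemma phiPsi_eq_polar {β : ℝ} {w : ℂ} (hw : w ≠ 0) :
    phiPsi β w = ‖w‖ * exp ((β⁻¹ * arg w : ℝ) * I) := by
  have hr : 0 < ‖w‖ := norm_pos_iff.mpr hw
  have hpow : w ^ ((1 : ℂ) / β) = (‖w‖ ^ β⁻¹ : ℝ) * exp ((β⁻¹ * arg w : ℝ) * I) := by
    rw [cpow_def_of_ne_zero hw, ← re_add_im (log w), log_re, log_im, Real.rpow_def_of_pos hr,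
      ofReal_exp, ← Complex.exp_add]
    push_cast
    ring_nf
  rw [phiPsi, hpow, real_smul, ← mul_assoc, ← ofReal_mul, ← Real.rpow_add hr]
  norm_num

lemma dist_ofReal_mul_exp_sq (r r' a b : ℝ) :
    dist (r * exp (a * I)) (r' * exp (b * I)) ^ 2
      = (r - r') ^ 2 + 4 * r * r' * Real.sin ((a - b) / 2) ^ 2 := by
  have hcos : Real.cos (a - b) = 1 - 2 * Real.sin ((a - b) / 2) ^ 2 := by
    rw [Real.sin_sq_eq_half_sub, mul_div_cancel₀ _ two_ne_zero]; ring
  rw [Real.cos_sub] at hcos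
  rw [Complex.dist_eq, Complex.sq_norm, normSq_apply]
  simp only [sub_re, sub_im, re_ofReal_mul, im_ofReal_mul, exp_ofReal_mul_I_re,
    exp_ofReal_mul_I_im]
  linear_combination
    r ^ 2 * Real.sin_sq_add_cos_sq a + r' ^ 2 * Real.sin_sq_add_cos_sq b - 2 * r * r' * hcos

lemma mul_dist_le_dist_of_polar {w w' z z' : ℂ} {r r' a a' b b' k : ℝ} (hr : 0 ≤ r)
    (hr' : 0 ≤ r') (hw : w = r * exp (a * I)) (hw' : w' = r' * exp (a' * I))
    (hz : z = r * exp (b * I)) (hz' : z' = r' * exp (b' * I)) (hk0 : 0 ≤ k) (hk1 : k ≤ 1)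
    (hsin : k * |Real.sin ((a - a') / 2)| ≤ |Real.sin ((b - b') / 2)|) :
    k * dist w w' ≤ dist z z' := by
  subst hw hw' hz hz'
  rw [← sq_le_sq₀ (by positivity) dist_nonneg, mul_pow, dist_ofReal_mul_exp_sq,
    dist_ofReal_mul_exp_sq]
  have hk : k ^ 2 ≤ 1 := pow_le_one₀ hk0 hk1
  have hsin2 : k ^ 2 * Real.sin ((a - a') / 2) ^ 2 ≤ Real.sin ((b - b') / 2) ^ 2 := by
    simpa [mul_pow, sq_abs] using pow_le_pow_left₀ (by positivity) hsin 2
  have hrr : 0 ≤ 4 * r * r' := by positivity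
  nlinarith [mul_le_mul_of_nonneg_right hk (sq_nonneg (r - r')),
    mul_le_mul_of_nonneg_left hsin2 hrr]

lemma div_mul_le_sin {M t : ℝ} (hM0 : 0 < M) (hMπ : M ≤ π) (ht0 : 0 ≤ t) (htM : t ≤ M) :
    Real.sin M / M * t ≤ Real.sin t := by
  have h := strictConcaveOn_sin_Icc.concaveOn.2
    (⟨le_rfl, Real.pi_pos.le⟩ : (0 : ℝ) ∈ Set.Icc 0 π) (⟨hM0.le, hMπ⟩ : M ∈ Set.Icc 0 π)
    (sub_nonneg.2 ((div_le_one hM0).2 htM)) (div_nonneg ht0 hM0.le) (sub_add_cancel 1 (t / M))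
  simp only [smul_eq_mul, mul_zero, zero_add, Real.sin_zero, div_mul_cancel₀ _ hM0.ne'] at h
  calc Real.sin M / M * t = t / M * Real.sin M := by ring
    _ ≤ Real.sin t := h

lemma min_mul_abs_sin_le_abs_sin_mul {M κ y : ℝ} (hM0 : 0 < M) (hMπ : M ≤ π) (hκ : 0 ≤ κ)
    (hy : |κ * y| ≤ M) :
    min 1 (Real.sin M / M * κ) * |Real.sin y| ≤ |Real.sin (κ * y)| := by
  have hc : 0 ≤ Real.sin M / M :=
    div_nonneg (Real.sin_nonneg_of_nonneg_of_le_pi hM0.le hMπ) hM0.le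
  calc min 1 (Real.sin M / M * κ) * |Real.sin y|
      ≤ Real.sin M / M * κ * |y| :=
        mul_le_mul (min_le_right _ _) Real.abs_sin_le_abs (abs_nonneg _) (by positivity)
    _ = Real.sin M / M * |κ * y| := by rw [abs_mul, abs_of_nonneg hκ, mul_assoc]
    _ ≤ Real.sin |κ * y| := div_mul_le_sin hM0 hMπ (abs_nonneg _) hy
    _ = |Real.sin (κ * y)| := (Real.abs_sin_eq_sin_abs_of_abs_le_pi (hy.trans hMπ)).symm

lemma abs_half_arg_sub_le_of_mem_sector {β : ℝ} (hβ : 0 < β) {w w' : ℂ} (hw : w ∈ sector β)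
    (hw' : w' ∈ sector β) :
    |(arg w - arg w') / 2| ≤ π / 2 ∧ |β⁻¹ * ((arg w - arg w') / 2)| ≤ π / (1 + β) := by
  obtain ⟨-, -, hw0, hwβ⟩ := hw
  obtain ⟨-, -, hw0', hwβ'⟩ := hw'
  have hπ : |arg w - arg w'| ≤ π :=
    abs_sub_le_iff.2 ⟨by linarith [arg_le_pi w], by linarith [arg_le_pi w']⟩
  have hsector : |arg w - arg w'| ≤ 2 * π * β / (1 + β) :=
    abs_sub_le_iff.2 ⟨by linarith, by linarith⟩
  rw [abs_mul, abs_div, abs_two, abs_inv, abs_of_pos hβ]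
  refine ⟨by linarith, ?_⟩
  calc β⁻¹ * (|arg w - arg w'| / 2) ≤ β⁻¹ * (2 * π * β / (1 + β) / 2) := by gcongr
    _ = π / (1 + β) := by field_simp

theorem stmt17_general (β : ℝ) (hβ : 0 < β) :
    ∃ K₁ K₂ : ℝ, 0 < K₁ ∧
      ∀ w ∈ sector β, ∀ w' ∈ sector β,
        K₁ * dist w w' ≤ dist (phiPsi β w) (phiPsi β w') ∧
        dist (phiPsi β w) (phiPsi β w') ≤ K₂ * dist w w' := by
  set M := max (π / 2) (π / (1 + β))
  have hM0 : 0 < M := lt_max_of_lt_left (by positivity)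
  have hMπ : M < π := max_lt (by linarith [Real.pi_pos]) (div_lt_self Real.pi_pos (by linarith))
  set c := Real.sin M / M
  have hc : 0 < c := div_pos (Real.sin_pos_of_pos_of_lt_pi hM0 hMπ) hM0
  have hk₁ : 0 < min 1 (c * β⁻¹) := lt_min one_pos (by positivity)
  have hk₂ : 0 < min 1 (c * β) := lt_min one_pos (by positivity)
  refine ⟨min 1 (c * β⁻¹), (min 1 (c * β))⁻¹, hk₁, fun w hw w' hw' => ?_⟩
  obtain ⟨hy, hyβ⟩ := abs_half_arg_sub_le_of_mem_sector hβ hw hw'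
  have hwpolar := (norm_mul_exp_arg_mul_I w).symm
  have hwpolar' := (norm_mul_exp_arg_mul_I w').symm
  have hφ := phiPsi_eq_polar (β := β) (norm_pos_iff.mp hw.1)
  have hφ' := phiPsi_eq_polar (β := β) (norm_pos_iff.mp hw'.1)
  have hangle : (β⁻¹ * arg w - β⁻¹ * arg w') / 2 = β⁻¹ * ((arg w - arg w') / 2) := by ring
  constructor
  · refine mul_dist_le_dist_of_polar (norm_nonneg _) (norm_nonneg _) hwpolar hwpolar' hφ hφ'
      hk₁.le (min_le_left _ _) ?_
    rw [hangle]
    exact min_mul_abs_sin_le_abs_sin_mul hM0 hMπ.le (inv_nonneg.2 hβ.le)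
      (hyβ.trans (le_max_right _ _))
  · refine (le_inv_mul_iff₀ hk₂).2 (mul_dist_le_dist_of_polar (norm_nonneg _) (norm_nonneg _)
      hφ hφ' hwpolar hwpolar' hk₂.le (min_le_left _ _) ?_)
    rw [hangle]
    have hβy : β * (β⁻¹ * ((arg w - arg w') / 2)) = (arg w - arg w') / 2 :=
      mul_inv_cancel_left₀ hβ.ne' _
    have h := min_mul_abs_sin_le_abs_sin_mul hM0 hMπ.le hβ.le
      (by rw [hβy]; exact hy.trans (le_max_left _ _))
    rwa [hβy] at h

/-- for β ∈ (0,1), the composition Φ ∘ ψ is bi-Lipschitz on the sector. -/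
theorem stmt17 (β : ℝ) (hβ : 0 < β) (hβ1 : β < 1) :
    ∃ K₁ K₂ : ℝ, 0 < K₁ ∧
      ∀ w ∈ sector β, ∀ w' ∈ sector β,
        K₁ * dist w w' ≤ dist (phiPsi β w) (phiPsi β w') ∧
        dist (phiPsi β w) (phiPsi β w') ≤ K₂ * dist w w' :=
  stmt17_general β hβ
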